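/- arXiv:2102.04931 — 3 statements merged into one kernel-verified Lean document; each statement's English description precedes it below -/
import Mathlib

section
/- Fix two angles θ_i, θ_j ∈ ℝ. The Lebesgue measure of the set of angles φ ∈ [0,π) for which the line through the origin at angle φ separates the unit vectors (cos θ_i, sin θ_i) and (cos θ_j, sin θ_j) — i.e. for which sin(θ_i − φ) and sin(θ_j − φ) have strictly opposite signs — equals d_{S^1}(θ_i, θ_j). Consequently, for φ chosen uniformly at random from [0,π), the probability that θ_i and θ_j land in different half-planes equals d_{S^1}(θ_i, θ_j)/π. -/
open Real MeasureTheory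

/-- The circle distance between angles `x` and `y`:
the minimum over integers `k` of `|x - y - 2πk|`. -/
noncomputable def dS1 (x y : ℝ) : ℝ := ⨅ k : ℤ, |x - y - 2 * Real.pi * k|

lemma dS1_eq_arccos_cos (x y : ℝ) : dS1 x y = Real.arccos (Real.cos (x - y)) := by
  set δ := x - y with hδ
  have h2π : (0:ℝ) < 2 * π := by positivity
  set k₀ : ℤ := toIocDiv h2π (-π) δ with hk₀
  set r : ℝ := toIocMod h2π (-π) δ with hr
  have hmem : r ∈ Set.Ioc (-π) (-π + 2 * π) := toIocMod_mem_Ioc h2π (-π) δ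
  have hmem' : -π < r ∧ r ≤ π := by
    constructor
    · exact hmem.1
    · have := hmem.2; linarith
  have hrd : δ = r + 2 * π * k₀ := by
    have := toIocMod_add_toIocDiv_zsmul h2π (-π) δ
    rw [← hr, ← hk₀] at this
    push_cast [zsmul_eq_mul] at this ⊢
    linarith
  have habsr : |r| ≤ π := by
    rw [abs_le]; exact ⟨by linarith [hmem'.1], hmem'.2⟩
  have hcos : Real.cos δ = Real.cos r := by
    rw [hrd, add_comm]
    have := Real.cos_add_int_mul_two_pi r k₀
    rw [show (k₀:ℝ) * (2 * π) = 2 * π * k₀ by ring] at this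
    rw [show 2 * π * (k₀:ℝ) + r = r + (k₀:ℝ) * (2*π) by ring]
    exact Real.cos_add_int_mul_two_pi r k₀
  have harc : Real.arccos (Real.cos r) = |r| := by
    rcases le_or_gt 0 r with h | h
    · rw [abs_of_nonneg h]
      exact Real.arccos_cos h hmem'.2
    · rw [abs_of_neg h, ← Real.cos_neg]
      exact Real.arccos_cos (by linarith) (by linarith [hmem'.1])
  rw [hcos, harc]
  unfold dS1
  rw [← hδ]
  apply le_antisymm
  · have : |δ - 2 * π * k₀| = |r| := by rw [hrd]; ring_nf
    calc (⨅ k : ℤ, |δ - 2 * π * k|) ≤ |δ - 2 * π * k₀| :=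
          ciInf_le ⟨0, fun z hz => by obtain ⟨k, rfl⟩ := hz; exact abs_nonneg _⟩ k₀
      _ = |r| := this
  · apply le_ciInf
    intro k
    rcases eq_or_ne k k₀ with rfl | hk
    · rw [hrd]; apply le_of_eq; ring_nf
    · have hm : (1:ℤ) ≤ |k₀ - k| := Int.one_le_abs (sub_ne_zero.mpr (Ne.symm hk))
      have hm' : (1:ℝ) ≤ |(k₀:ℝ) - k| := by
        have : ((1:ℤ):ℝ) ≤ ((|k₀ - k| : ℤ) : ℝ) := Int.cast_le.mpr hm
        push_cast at this
        exact this
      have : δ - 2 * π * k = r + 2 * π * ((k₀:ℝ) - k) := by rw [hrd]; ring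
      rw [this]
      have h1 : 2 * π * |(k₀:ℝ) - k| ≤ |r + 2 * π * ((k₀:ℝ) - k)| + |r| := by
        calc 2 * π * |(k₀:ℝ) - k| = |2 * π * ((k₀:ℝ) - k)| := by
              rw [abs_mul, abs_of_pos h2π]
          _ = |(r + 2 * π * ((k₀:ℝ) - k)) + (-r)| := by congr 1; ring
          _ ≤ |r + 2 * π * ((k₀:ℝ) - k)| + |(-r)| := abs_add_le _ _
          _ = |r + 2 * π * ((k₀:ℝ) - k)| + |r| := by rw [abs_neg]
      nlinarith [abs_nonneg (r + 2 * π * ((k₀:ℝ) - k)), Real.pi_pos]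

lemma cos_key {d u : ℝ} (hd0 : 0 ≤ d) (hdπ : d ≤ π)
    (hu : u ∈ Set.Ioc (d - 2 * π) d) :
    Real.cos d < Real.cos u ↔ |u| < d := by
  constructor
  · intro h
    by_contra hcon
    push_neg at hcon
    rcases le_or_gt 0 u with h0 | h0
    · rw [abs_of_nonneg h0] at hcon
      have : u = d := le_antisymm hu.2 hcon
      rw [this] at h; exact lt_irrefl _ h
    · rw [abs_of_neg h0] at hcon
      rcases le_or_gt (-u) π with h1 | h1
      · have := Real.cos_le_cos_of_nonneg_of_le_pi hd0 h1 hcon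
        rw [Real.cos_neg] at this
        linarith
      · have h2 : d ≤ u + 2 * π := by linarith [hu.1]
        have h3 : u + 2 * π ≤ π := by linarith
        have := Real.cos_le_cos_of_nonneg_of_le_pi hd0 h3 h2
        have h4 : Real.cos (u + 2 * π) = Real.cos u := Real.cos_add_two_pi u
        linarith
  · intro h
    have h1 : Real.cos d < Real.cos |u| :=
      Real.cos_lt_cos_of_nonneg_of_le_pi (abs_nonneg u) hdπ h
    rwa [Real.cos_abs] at h1

theorem stmt2 (θi θj : ℝ) :
    volume {φ : ℝ | φ ∈ Set.Ico 0 Real.pi ∧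
        Real.sin (θi - φ) * Real.sin (θj - φ) < 0} =
      ENNReal.ofReal (dS1 θi θj) := by
  set d : ℝ := Real.arccos (Real.cos (θi - θj)) with hd
  have hd0 : 0 ≤ d := Real.arccos_nonneg _
  have hdπ : d ≤ π := Real.arccos_le_pi _
  have hcd : Real.cos d = Real.cos (θi - θj) :=
    Real.cos_arccos (Real.neg_one_le_cos _) (Real.cos_le_one _)
  set s : ℝ := (θi + θj) / 2 with hs
  set S : Set ℝ := {φ : ℝ | Real.sin (θi - φ) * Real.sin (θj - φ) < 0} with hS
  -- the defining function and its properties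
  set f : ℝ → ℝ := fun φ => Real.sin (θi - φ) * Real.sin (θj - φ) with hf
  have hfc : Continuous f := by fun_prop
  have hSmeas : MeasurableSet S := by
    have : S = f ⁻¹' Set.Iio 0 := rfl
    rw [this]
    exact hfc.measurable measurableSet_Iio
  have hfper : Function.Periodic f π := by
    intro x
    simp only [hf]
    have e1 : θi - (x + π) = (θi - x) - π := by ring
    have e2 : θj - (x + π) = (θj - x) - π := by ring
    rw [e1, e2, Real.sin_sub_pi, Real.sin_sub_pi]
    ring
  -- condition rewritten via cosines
  have hcond : ∀ φ : ℝ, (f φ < 0 ↔ Real.cos d < Real.cos (2 * (φ - s))) := by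
    intro φ
    have h1 := Real.cos_sub (θi - φ) (θj - φ)
    have h2 := Real.cos_add (θi - φ) (θj - φ)
    have e1 : θi - φ - (θj - φ) = θi - θj := by ring
    have e2 : θi - φ + (θj - φ) = -(2 * (φ - s)) := by rw [hs]; ring
    rw [e1] at h1
    rw [e2, Real.cos_neg] at h2
    constructor
    · intro h; simp only [hf] at h; rw [hcd]; nlinarith
    · intro h; rw [hcd] at h; simp only [hf]; nlinarith
  -- the key interval identity
  set a : ℝ := s + d / 2 - π with ha
  have hset : S ∩ Set.Ioc a (a + π) = Set.Ioo (s - d / 2) (s + d / 2) := by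
    ext φ
    simp only [Set.mem_inter_iff, Set.mem_Ioc, Set.mem_Ioo, hS, Set.mem_setOf_eq]
    rw [show (Real.sin (θi - φ) * Real.sin (θj - φ) < 0) = (f φ < 0) from rfl, hcond φ]
    constructor
    · rintro ⟨h, h1, h2⟩
      have hu : 2 * (φ - s) ∈ Set.Ioc (d - 2 * π) d := by
        constructor
        · rw [ha] at h1; linarith
        · rw [ha] at h2; linarith
      have := (cos_key hd0 hdπ hu).mp h
      rw [abs_lt] at this
      constructor <;> linarith [this.1, this.2]
    · rintro ⟨h1, h2⟩
      have hu : 2 * (φ - s) ∈ Set.Ioc (d - 2 * π) d := by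
        constructor
        · have : -d ≥ d - 2 * π := by linarith
          linarith
        · linarith
      refine ⟨(cos_key hd0 hdπ hu).mpr ?_, ?_, ?_⟩
      · rw [abs_lt]; constructor <;> linarith
      · rw [ha]; linarith
      · rw [ha]; linarith
  -- periodicity invariance for the fundamental-domain argument
  have hinv : ∀ g : AddSubgroup.zmultiples (π : ℝ), (fun x => g +ᵥ x) ⁻¹' S = S := by
    rintro ⟨g, hg⟩
    obtain ⟨k, rfl⟩ := hg
    ext x
    have hxx := (hfper.zsmul k) x
    simp only [hf] at hxx
    show (k • π : ℝ) + x ∈ S ↔ x ∈ S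
    simp only [hS, Set.mem_setOf_eq]
    rw [add_comm, hxx]
  -- rewrite the statement set
  have hseteq : {φ : ℝ | φ ∈ Set.Ico 0 Real.pi ∧
      Real.sin (θi - φ) * Real.sin (θj - φ) < 0} = S ∩ Set.Ico 0 π := by
    ext φ
    simp only [Set.mem_inter_iff, Set.mem_setOf_eq, hS]
    tauto
  rw [hseteq]
  have h1 : volume (S ∩ Set.Ico 0 π) = volume (S ∩ Set.Ioc 0 π) :=
    measure_congr ((Filter.EventuallyEq.refl _ _).inter Ico_ae_eq_Ioc)
  have h2 : volume (S ∩ Set.Ioc 0 (0 + π)) = volume (S ∩ Set.Ioc a (a + π)) :=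
    (isAddFundamentalDomain_Ioc Real.pi_pos 0).measure_set_eq
      (isAddFundamentalDomain_Ioc Real.pi_pos a) hSmeas hinv
  rw [h1, show Set.Ioc (0:ℝ) π = Set.Ioc 0 (0 + π) by rw [zero_add], h2, hset,
    Real.volume_Ioo, dS1_eq_arccos_cos]
  congr 1
  rw [← hd]
  ring
end

section
/- Let G be a finite simple graph with adjacency matrix (a_{ij}), let g be an admissible function with g(x) < 1 for all x with d_{S^1}(0,x) > 0, and set c(g) = inf over x with 0 < d_{S^1}(0,x) ≤ π of (2/π)·d_{S^1}(0,x)/(1 − g(x)). Then for EVERY configuration of angles θ_1,…,θ_n ∈ ℝ (not necessarily energy-minimizing), the expected cut satisfies E(θ) ≥ c(g)·( |E|/2 − f(θ_1,…,θ_n)/4 ). -/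
open Real Finset MeasureTheory intervalIntegral

/-- `g : ℝ → ℝ` is admissible: 2π-periodic, even, differentiable, with
`g 0 = 1 = max g` and `g π = -1 = min g`. -/
def Admissible (g : ℝ → ℝ) : Prop :=
  Function.Periodic g (2 * Real.pi) ∧ (∀ x, g (-x) = g x) ∧ Differentiable ℝ g ∧
    g 0 = 1 ∧ (∀ x, g x ≤ 1) ∧ g Real.pi = -1 ∧ (∀ x, -1 ≤ g x)

/-- The approximation constant associated to an admissible function `g`. -/
noncomputable def cg (g : ℝ → ℝ) : ℝ :=
  sInf {y : ℝ | ∃ x : ℝ, 0 < dS1 0 x ∧ dS1 0 x ≤ Real.pi ∧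
    y = (2 / Real.pi) * dS1 0 x / (1 - g x)}

/-- The Kuramoto-type energy of the configuration θ. -/
noncomputable def energy {n : ℕ} (a : Fin n → Fin n → ℝ) (g : ℝ → ℝ)
    (θ : Fin n → ℝ) : ℝ :=
  ∑ i, ∑ j, a i j * g (θ i - θ j)

/-- The size of the cut induced by the line through the origin at angle `φ`. -/
noncomputable def cutAt {n : ℕ} (a : Fin n → Fin n → ℝ) (θ : Fin n → ℝ) (φ : ℝ) : ℝ :=
  (1 / 2) * ∑ i, ∑ j, a i j *
    (if Real.sin (θ i - φ) * Real.sin (θ j - φ) < 0 then 1 else 0)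

/-- The expected cut under randomized rounding of the configuration θ. -/
noncomputable def expCut {n : ℕ} (a : Fin n → Fin n → ℝ) (θ : Fin n → ℝ) : ℝ :=
  (1 / Real.pi) * ∫ φ in (0:ℝ)..Real.pi, cutAt a θ φ

/-! The line at angle `φ` separates `A` and `B` exactly when `cos (A - B) < cos (A + B - 2φ)`.
As `φ` runs over a period of length `π`, this holds on an interval of length `d_{S¹}(0, A - B)`
centred at `(A + B)/2`, so the pair `i, j` is cut with probability at least
`d_{S¹}(0, θ_i - θ_j)/π ≥ c(g) (1 - g(θ_i - θ_j))/2`; summing over the edges gives the bound. -/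

lemma abs_sub_two_pi_mul (x z : ℝ) : |x - 2 * π * z| = 2 * π * |x / (2 * π) - z| := by
  rw [← abs_of_pos two_pi_pos, ← abs_mul, abs_of_pos two_pi_pos]
  congr 1
  field_simp

lemma dS1_zero_eq (x : ℝ) : dS1 0 x = |x - 2 * π * round (x / (2 * π))| := by
  have hneg (k : ℤ) : |0 - x - 2 * π * k| = |x - 2 * π * ((-k : ℤ) : ℝ)| := by
    rw [← abs_neg]
    push_cast
    ring_nf
  refine le_antisymm ?_ (le_ciInf fun k => ?_)
  · have hbdd : BddBelow (Set.range fun k : ℤ => |0 - x - 2 * π * k|) :=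
      ⟨0, by rintro _ ⟨k, rfl⟩; positivity⟩
    calc dS1 0 x ≤ |0 - x - 2 * π * ((-round (x / (2 * π)) : ℤ) : ℝ)| := ciInf_le hbdd _
      _ = _ := by rw [hneg, neg_neg]
  · rw [hneg, abs_sub_two_pi_mul, abs_sub_two_pi_mul]
    exact mul_le_mul_of_nonneg_left (round_le _ _) two_pi_pos.le

lemma dS1_zero_nonneg (x : ℝ) : 0 ≤ dS1 0 x := by
  rw [dS1_zero_eq]
  positivity

lemma dS1_zero_le_pi (x : ℝ) : dS1 0 x ≤ π :=
  calc dS1 0 x = 2 * π * |x / (2 * π) - round (x / (2 * π))| := by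
        rw [dS1_zero_eq, abs_sub_two_pi_mul]
    _ ≤ 2 * π * (1 / 2) := by gcongr; exact abs_sub_round _
    _ = π := by ring

lemma cos_dS1_zero (x : ℝ) : cos (dS1 0 x) = cos x := by
  rw [dS1_zero_eq, cos_abs, mul_comm, cos_sub_int_mul_two_pi]

lemma Admissible.apply_eq_one_of_dS1_zero_eq_zero {g : ℝ → ℝ} (hg : Admissible g) {x : ℝ}
    (hx : dS1 0 x = 0) : g x = 1 := by
  rw [dS1_zero_eq, abs_eq_zero, sub_eq_zero, mul_comm] at hx
  rw [hx, hg.1.int_mul_eq, hg.2.2.2.1]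

lemma sin_mul_sin_neg_iff (A B φ : ℝ) :
    sin (A - φ) * sin (B - φ) < 0 ↔ cos (A - B) < cos (A + B - 2 * φ) := by
  rw [show A - B = (A - φ) - (B - φ) by ring, show A + B - 2 * φ = (A - φ) + (B - φ) by ring,
    cos_sub, cos_add]
  constructor <;> intro h <;> linarith

lemma intervalIntegrable_ite_one_zero {p : ℝ → Prop} [DecidablePred p]
    (hp : MeasurableSet {φ | p φ}) (a b : ℝ) :
    IntervalIntegrable (fun φ => if p φ then (1 : ℝ) else 0) volume a b := by
  refine (intervalIntegrable_const (c := (1 : ℝ))).mono_fun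
    (measurable_const.ite hp measurable_const).aestronglyMeasurable (ae_of_all _ fun φ => ?_)
  by_cases h : p φ <;> simp [h]

lemma le_integral_ite_cos_lt (c : ℝ) {d : ℝ} (hd : 0 ≤ d) (hdπ : d ≤ π) :
    d ≤ ∫ φ in (0 : ℝ)..π, if cos d < cos (c - 2 * φ) then (1 : ℝ) else 0 := by
  set f : ℝ → ℝ := fun φ => if cos d < cos (c - 2 * φ) then 1 else 0 with hf
  have hint (a b : ℝ) : IntervalIntegrable f volume a b :=
    intervalIntegrable_ite_one_zero (measurableSet_lt measurable_const (by fun_prop)) a b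
  have hper : Function.Periodic f π := fun φ => by
    simp only [hf, show c - 2 * (φ + π) = c - 2 * φ - 2 * π by ring, cos_sub_two_pi]
  have hone : Set.EqOn f 1 (Set.Ioo (c / 2 - d / 2) (c / 2 + d / 2)) := fun φ hφ => by
    have hlt : |c - 2 * φ| < d := abs_lt.2 ⟨by linarith [hφ.2], by linarith [hφ.1]⟩
    simp only [hf, Pi.one_apply, ← cos_abs (c - 2 * φ),
      cos_lt_cos_of_nonneg_of_le_pi (abs_nonneg _) hdπ hlt, if_true]
  calc d = ∫ φ in (c / 2 - d / 2)..(c / 2 + d / 2), f φ := by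
        rw [integral_congr_Ioo_of_le (by linarith) hone]
        simp
    _ ≤ ∫ φ in (c / 2 - π / 2)..(c / 2 - π / 2 + π), f φ :=
        integral_mono_interval (by linarith) (by linarith) (by linarith)
          (ae_of_all _ fun φ => by simp only [hf]; split_ifs <;> norm_num) (hint _ _)
    _ = ∫ φ in (0 : ℝ)..π, f φ := by simpa using hper.intervalIntegral_add_eq (c / 2 - π / 2) 0

noncomputable def separatingLength (A B : ℝ) : ℝ :=
  ∫ φ in (0 : ℝ)..π, if sin (A - φ) * sin (B - φ) < 0 then 1 else 0

lemma intervalIntegrable_ite_sin_mul_sin_neg (A B a b : ℝ) :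
    IntervalIntegrable (fun φ => if sin (A - φ) * sin (B - φ) < 0 then (1 : ℝ) else 0)
      volume a b :=
  intervalIntegrable_ite_one_zero (measurableSet_lt (by fun_prop) measurable_const) a b

lemma dS1_zero_sub_le_separatingLength (A B : ℝ) : dS1 0 (A - B) ≤ separatingLength A B := by
  have hsep : separatingLength A B =
      ∫ φ in (0 : ℝ)..π, if cos (dS1 0 (A - B)) < cos (A + B - 2 * φ) then (1 : ℝ) else 0 := by
    refine integral_congr fun φ _ => ?_
    simp only [cos_dS1_zero, sin_mul_sin_neg_iff]
  rw [hsep]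
  exact le_integral_ite_cos_lt _ (dS1_zero_nonneg _) (dS1_zero_le_pi _)

lemma integral_cutAt {n : ℕ} (a : Fin n → Fin n → ℝ) (θ : Fin n → ℝ) :
    ∫ φ in (0 : ℝ)..π, cutAt a θ φ =
      1 / 2 * ∑ i, ∑ j, a i j * separatingLength (θ i) (θ j) := by
  have hint (i j : Fin n) :=
    (intervalIntegrable_ite_sin_mul_sin_neg (θ i) (θ j) 0 π).const_mul (a i j)
  have hrow (i : Fin n) : IntervalIntegrable
      (fun φ => ∑ j, a i j * if sin (θ i - φ) * sin (θ j - φ) < 0 then (1 : ℝ) else 0)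
      volume 0 π := by
    simpa only [Finset.sum_fn] using IntervalIntegrable.sum univ fun j _ => hint i j
  simp only [cutAt, separatingLength]
  rw [intervalIntegral.integral_const_mul, integral_finsetSum fun i _ => hrow i]
  simp_rw [integral_finsetSum fun j _ => hint _ j, intervalIntegral.integral_const_mul]

lemma cg_le {g : ℝ → ℝ} (hg : ∀ x, g x ≤ 1) {x : ℝ} (hx₀ : 0 < dS1 0 x) :
    cg g ≤ 2 / π * dS1 0 x / (1 - g x) := by
  refine csInf_le ⟨0, ?_⟩ ⟨x, hx₀, dS1_zero_le_pi x, rfl⟩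
  rintro _ ⟨y, -, -, rfl⟩
  exact div_nonneg (mul_nonneg (by positivity) (dS1_zero_nonneg y)) (sub_nonneg.2 (hg y))

lemma cg_mul_one_sub_le {g : ℝ → ℝ} (hg : Admissible g) (hlt : ∀ x, 0 < dS1 0 x → g x < 1)
    (x : ℝ) : cg g * (1 - g x) ≤ 2 / π * dS1 0 x := by
  rcases (dS1_zero_nonneg x).eq_or_lt with hx₀ | hx₀
  · rw [hg.apply_eq_one_of_dS1_zero_eq_zero hx₀.symm, ← hx₀]
    simp
  · have hpos : 0 < 1 - g x := sub_pos.2 (hlt x hx₀)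
    calc cg g * (1 - g x) ≤ 2 / π * dS1 0 x / (1 - g x) * (1 - g x) :=
          mul_le_mul_of_nonneg_right (cg_le hg.2.2.2.2.1 hx₀) hpos.le
      _ = 2 / π * dS1 0 x := div_mul_cancel₀ _ hpos.ne'

theorem stmt5_general (n : ℕ) (a : Fin n → Fin n → ℝ)
    (h01 : ∀ i j, a i j = 0 ∨ a i j = 1)
    (E : ℝ) (hE : ∑ i, ∑ j, a i j = 2 * E)
    (g : ℝ → ℝ) (hg : Admissible g)
    (hlt : ∀ x, 0 < dS1 0 x → g x < 1)
    (θ : Fin n → ℝ) :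
    expCut a θ ≥ cg g * (E / 2 - energy a g θ / 4) := by
  have ha (i j : Fin n) : 0 ≤ a i j := by rcases h01 i j with h | h <;> simp [h]
  have hterm (i j : Fin n) :
      π / 2 * (cg g * (1 - g (θ i - θ j))) ≤ separatingLength (θ i) (θ j) :=
    calc π / 2 * (cg g * (1 - g (θ i - θ j))) ≤ π / 2 * (2 / π * dS1 0 (θ i - θ j)) :=
          mul_le_mul_of_nonneg_left (cg_mul_one_sub_le hg hlt _) (by positivity)
      _ = dS1 0 (θ i - θ j) := by field_simp
      _ ≤ separatingLength (θ i) (θ j) := dS1_zero_sub_le_separatingLength _ _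
  calc cg g * (E / 2 - energy a g θ / 4)
      = 1 / π * (1 / 2 * ∑ i, ∑ j, a i j * (π / 2 * (cg g * (1 - g (θ i - θ j))))) := by
        have hsummand (i j : Fin n) : a i j * (π / 2 * (cg g * (1 - g (θ i - θ j)))) =
            π / 2 * cg g * a i j - π / 2 * cg g * (a i j * g (θ i - θ j)) := by ring
        simp_rw [hsummand, sum_sub_distrib, ← mul_sum, hE, energy]
        field_simp
        ring
    _ ≤ 1 / π * (1 / 2 * ∑ i, ∑ j, a i j * separatingLength (θ i) (θ j)) := by
        gcongr with i _ j _
        exacts [ha i j, hterm i j]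
    _ = expCut a θ := by rw [expCut, integral_cutAt]

theorem stmt5 (n : ℕ) (a : Fin n → Fin n → ℝ)
    (hsymm : ∀ i j, a i j = a j i)
    (h01 : ∀ i j, a i j = 0 ∨ a i j = 1)
    (hdiag : ∀ i, a i i = 0)
    (E : ℝ) (hE : ∑ i, ∑ j, a i j = 2 * E)
    (g : ℝ → ℝ) (hg : Admissible g)
    (hlt : ∀ x, 0 < dS1 0 x → g x < 1)
    (θ : Fin n → ℝ) :
    expCut a θ ≥ cg g * (E / 2 - energy a g θ / 4) :=
  stmt5_general n a h01 E hE g hg hlt θ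
end

section
/- The Goemans–Williamson constant satisfies 0.878 < (2/π)·inf_{0 < x ≤ π} x/(1 − cos x) < 0.879; in particular, for every x ∈ (0,π] one has (2/π)·x/(1 − cos x) > 0.878. -/
/-!
On `x ≥ 0` the Taylor partial sums of `cos` and `sin` alternately over- and under-estimate
them: each remainder is the antiderivative, vanishing at `0`, of (minus) the previous remainder
of the other function, so its sign propagates by monotonicity. The degree-10 lower bound for
`cos` turns `x / (1 - cos x) ≥ 1.37932` on `(0, π]` into a polynomial inequality, and the
degree-12 upper bound at `x = 2.3` shows the infimum is below `0.879`.
-/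

open Real Finset Nat

lemma hasDerivAt_pow_succ_div_factorial (m : ℕ) (x : ℝ) :
    HasDerivAt (fun y : ℝ ↦ y ^ (m + 1) / (m + 1)!) (x ^ m / m !) x := by
  refine ((hasDerivAt_pow (m + 1) x).div_const ((m + 1)! : ℝ)).congr_deriv ?_
  rw [Nat.factorial_succ]
  push_cast
  field_simp

noncomputable def cosTaylor (n : ℕ) (x : ℝ) : ℝ :=
  ∑ k ∈ range n, (-1) ^ k * x ^ (2 * k) / (2 * k)!

noncomputable def sinTaylor (n : ℕ) (x : ℝ) : ℝ :=
  ∑ k ∈ range n, (-1) ^ k * x ^ (2 * k + 1) / (2 * k + 1)!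

lemma cosTaylor_succ (n : ℕ) (x : ℝ) :
    cosTaylor (n + 1) x = 1 - ∑ k ∈ range n, (-1) ^ k * (x ^ (2 * k + 2) / (2 * k + 2)!) := by
  rw [cosTaylor, sum_range_succ', sub_eq_neg_add, ← sum_neg_distrib]
  congr 1
  · refine sum_congr rfl fun k _ ↦ ?_
    rw [pow_succ, mul_add 2 k 1]
    ring
  · simp

lemma hasDerivAt_sinTaylor (n : ℕ) (x : ℝ) : HasDerivAt (sinTaylor n) (cosTaylor n x) x := by
  unfold sinTaylor cosTaylor
  refine HasDerivAt.fun_sum fun k _ ↦ ?_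
  simpa only [mul_div_assoc] using
    (hasDerivAt_pow_succ_div_factorial (2 * k) x).const_mul ((-1 : ℝ) ^ k)

lemma hasDerivAt_cosTaylor_succ (n : ℕ) (x : ℝ) :
    HasDerivAt (cosTaylor (n + 1)) (-sinTaylor n x) x := by
  have hsum := HasDerivAt.fun_sum (u := range n) fun k _ ↦
    (hasDerivAt_pow_succ_div_factorial (2 * k + 1) x).const_mul ((-1 : ℝ) ^ k)
  rw [funext (cosTaylor_succ n), sinTaylor]
  simpa only [mul_div_assoc, zero_sub] using hsum.const_sub 1

@[simp] lemma sinTaylor_zero (n : ℕ) : sinTaylor n 0 = 0 := by simp [sinTaylor]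

@[simp] lemma cosTaylor_succ_zero (n : ℕ) : cosTaylor (n + 1) 0 = 1 := by
  simp [cosTaylor_succ]

lemma nonneg_of_hasDerivAt_of_nonneg {F f : ℝ → ℝ} (hF : ∀ x, HasDerivAt F (f x) x)
    (hF₀ : F 0 = 0) (hf : ∀ x, 0 < x → 0 ≤ f x) {x : ℝ} (hx : 0 ≤ x) : 0 ≤ F x := by
  have hmono : MonotoneOn F (Set.Ici 0) :=
    monotoneOn_of_hasDerivWithinAt_nonneg (convex_Ici 0)
      (fun y _ ↦ (hF y).continuousAt.continuousWithinAt) (fun y _ ↦ (hF y).hasDerivWithinAt)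
      (fun y hy ↦ hf y (by rwa [interior_Ici] at hy))
  simpa [hF₀] using hmono Set.self_mem_Ici hx hx

lemma sin_sub_sinTaylor_sign_of_cos {n : ℕ} {s : ℝ}
    (h : ∀ t, 0 < t → 0 ≤ s * (cos t - cosTaylor n t)) {x : ℝ} (hx : 0 ≤ x) :
    0 ≤ s * (sin x - sinTaylor n x) :=
  nonneg_of_hasDerivAt_of_nonneg
    (fun t ↦ ((hasDerivAt_sin t).sub (hasDerivAt_sinTaylor n t)).const_mul s) (by simp) h hx

lemma cos_sub_cosTaylor_succ_sign_of_sin {n : ℕ} {s : ℝ}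
    (h : ∀ t, 0 < t → 0 ≤ s * (sin t - sinTaylor n t)) {x : ℝ} (hx : 0 ≤ x) :
    0 ≤ -s * (cos x - cosTaylor (n + 1) x) := by
  refine nonneg_of_hasDerivAt_of_nonneg
    (fun t ↦ ((hasDerivAt_cos t).sub (hasDerivAt_cosTaylor_succ n t)).const_mul (-s)) (by simp)
    (fun t ht ↦ ?_) hx
  linarith [h t ht]

theorem cos_sin_sub_taylor_alternating (n : ℕ) {x : ℝ} (hx : 0 ≤ x) :
    0 ≤ (-1) ^ (n + 1) * (cos x - cosTaylor (n + 1) x) ∧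
      0 ≤ (-1) ^ (n + 1) * (sin x - sinTaylor (n + 1) x) := by
  induction n generalizing x with
  | zero =>
    simp [cosTaylor, sinTaylor, cos_le_one, sin_le hx]
  | succ n ih =>
    have hcos : ∀ {t : ℝ}, 0 ≤ t → 0 ≤ (-1) ^ (n + 2) * (cos t - cosTaylor (n + 2) t) :=
      fun ht ↦ by
        simpa [pow_succ] using
          cos_sub_cosTaylor_succ_sign_of_sin (fun t ht ↦ (ih ht.le).2) ht
    exact ⟨hcos hx, sin_sub_sinTaylor_sign_of_cos (fun t ht ↦ hcos ht.le) hx⟩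

lemma taylor_ten_le_cos {x : ℝ} (hx : 0 ≤ x) :
    1 - x ^ 2 / 2 + x ^ 4 / 24 - x ^ 6 / 720 + x ^ 8 / 40320 - x ^ 10 / 3628800 ≤ cos x := by
  have h := (cos_sin_sub_taylor_alternating 5 hx).1
  norm_num [cosTaylor, sum_range_succ, Nat.factorial] at h
  linarith

lemma cos_le_taylor_twelve {x : ℝ} (hx : 0 ≤ x) :
    cos x ≤ 1 - x ^ 2 / 2 + x ^ 4 / 24 - x ^ 6 / 720 + x ^ 8 / 40320 - x ^ 10 / 3628800 +
      x ^ 12 / 479001600 := by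
  have h := (cos_sin_sub_taylor_alternating 6 hx).1
  norm_num [cosTaylor, sum_range_succ, Nat.factorial] at h
  linarith

lemma cos_lt_one_of_mem_Ioc {x : ℝ} (hx : x ∈ Set.Ioc 0 π) : cos x < 1 := by
  simpa using cos_lt_cos_of_nonneg_of_le_pi le_rfl hx.2 hx.1

/- `x / (1 - cos x)` attains its minimum `≈ 1.38005` on `(0, π]` near `x ≈ 2.3311`;
the square hints for `nlinarith` are centred there. -/
lemma mul_one_sub_cos_le {x : ℝ} (h0 : 0 < x) (h1 : x ≤ 3.1416) :
    1.37932 * (1 - cos x) ≤ x := by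
  have hc := taylor_ten_le_cos h0.le
  nlinarith [sq_nonneg (x - 2.3315), sq_nonneg (x * (x - 2.3315)),
    sq_nonneg (x ^ 2 * (x - 2.3315)), sq_nonneg (x ^ 3 * (x - 2.3315)),
    mul_nonneg (sub_nonneg.2 h1) h0.le]

lemma le_two_div_pi_mul_div_one_sub_cos {x : ℝ} (hx : x ∈ Set.Ioc 0 π) :
    (0.8781 : ℝ) ≤ 2 / π * (x / (1 - cos x)) := by
  have hpos : 0 < 1 - cos x := sub_pos.2 (cos_lt_one_of_mem_Ioc hx)
  have hratio : 1.37932 ≤ x / (1 - cos x) :=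
    (le_div_iff₀ hpos).2 (mul_one_sub_cos_le hx.1 (hx.2.trans pi_lt_d4.le))
  calc (0.8781 : ℝ) ≤ 2 / 3.141593 * 1.37932 := by norm_num
    _ ≤ 2 / π * (x / (1 - cos x)) := by gcongr; exact pi_lt_d6.le

lemma two_div_pi_mul_div_one_sub_cos_lt : 2 / π * (2.3 / (1 - cos 2.3)) < (0.879 : ℝ) := by
  have hcos : 1.66627 ≤ 1 - cos 2.3 := by
    have := cos_le_taylor_twelve (x := 2.3) (by norm_num)
    norm_num at this ⊢
    linarith
  calc 2 / π * (2.3 / (1 - cos 2.3)) ≤ 2 / 3.141592 * (2.3 / 1.66627) := by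
        gcongr; exact pi_gt_d6.le
    _ < 0.879 := by norm_num

theorem stmt7 :
    (0.878 : ℝ) <
      sInf {y : ℝ | ∃ x ∈ Set.Ioc (0:ℝ) Real.pi,
        y = (2 / Real.pi) * (x / (1 - Real.cos x))} ∧
    sInf {y : ℝ | ∃ x ∈ Set.Ioc (0:ℝ) Real.pi,
        y = (2 / Real.pi) * (x / (1 - Real.cos x))} < (0.879 : ℝ) ∧
    ∀ x ∈ Set.Ioc (0:ℝ) Real.pi,
      (2 / Real.pi) * (x / (1 - Real.cos x)) > (0.878 : ℝ) := by
  set S := {y : ℝ | ∃ x ∈ Set.Ioc (0:ℝ) Real.pi,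
    y = (2 / Real.pi) * (x / (1 - Real.cos x))}
  have hlb : ∀ y ∈ S, (0.8781 : ℝ) ≤ y := by
    rintro y ⟨x, hx, rfl⟩
    exact le_two_div_pi_mul_div_one_sub_cos hx
  have hmem : 2 / π * (2.3 / (1 - cos 2.3)) ∈ S :=
    ⟨2.3, ⟨by norm_num, by linarith [pi_gt_d4]⟩, rfl⟩
  refine ⟨?_, ?_, fun x hx ↦ ?_⟩
  · linarith [le_csInf ⟨_, hmem⟩ hlb]
  · linarith [csInf_le ⟨_, hlb⟩ hmem, two_div_pi_mul_div_one_sub_cos_lt]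
  · linarith [le_two_div_pi_mul_div_one_sub_cos hx]
end
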